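/- The map exp^{(1)} restricted to U := {(u,v,w) ∈ ℝ³ : u > |v|} is a bijection from U onto the set {(x,y,z) ∈ ℝ³ : x > 0 and −x² + y² + 4|z| < 0}. -/

import Mathlib

open Set

/-- The sub-Lorentzian exponential map of the Heisenberg group at time `t`. -/
noncomputable def heisExp (t : ℝ) (p : ℝ × ℝ × ℝ) : ℝ × ℝ × ℝ :=
  if p.2.2 = 0 then (p.1 * t, p.2.1 * t, 0)
  else
    ((p.2.1 * (Real.cosh (p.2.2 * t) - 1) + p.1 * Real.sinh (p.2.2 * t)) / p.2.2,
     (p.2.1 * Real.sinh (p.2.2 * t) + p.1 * (Real.cosh (p.2.2 * t) - 1)) / p.2.2,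
     ((p.1^2 - p.2.1^2) / 2) * ((Real.sinh (p.2.2 * t) - p.2.2 * t) / p.2.2^2))

/-!
In the light-cone coordinates `X = x + y`, `Y = x - y` of the image (`ofLightCone X Y r` is the
point with these coordinates and `z = X Y / 2 · r`), `exp^{(1)}(u, v, w)` has `X = (u + v) g(w)`,
`Y = (u - v) g(-w)` and `r = φ(w)`, where `g = dslope exp 0`, i.e. `g(w) = (e^w - 1) / w > 0`, and
`φ = sinhRatio`. The target set is `{X > 0, Y > 0, |r| < 1/2}`, and `φ` is an odd increasing
bijection of `ℝ` onto `(-1/2, 1/2)`; so `w` is recovered from `r`, then `u ± v` from `X`, `Y`.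
-/

namespace Real

lemma sinh_lt_mul_cosh {x : ℝ} (hx : 0 < x) : sinh x < x * cosh x := by
  have hmono : StrictMonoOn (fun t ↦ t * cosh t - sinh t) (Ici 0) := by
    refine strictMonoOn_of_deriv_pos (convex_Ici 0) (by fun_prop) fun t ht ↦ ?_
    rw [interior_Ici, mem_Ioi] at ht
    have hderiv : HasDerivAt (fun t ↦ t * cosh t - sinh t) (1 * cosh t + t * sinh t - cosh t) t :=
      ((hasDerivAt_id t).mul (hasDerivAt_cosh t)).sub (hasDerivAt_sinh t)
    rw [hderiv.deriv]
    nlinarith [sinh_pos_iff.mpr ht]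
  simpa using hmono self_mem_Ici hx.le hx

lemma sq_le_sinh_sq (x : ℝ) : x ^ 2 ≤ sinh x ^ 2 := by
  rcases le_total 0 x with hx | hx
  · nlinarith [self_le_sinh_iff.mpr hx]
  · nlinarith [sinh_le_self_iff.mpr hx]

lemma one_add_sq_div_two_le_cosh (x : ℝ) : 1 + x ^ 2 / 2 ≤ cosh x := by
  obtain ⟨y, rfl⟩ : ∃ y, x = 2 * y := ⟨x / 2, by ring⟩
  rw [cosh_two_mul]
  nlinarith [sq_le_sinh_sq y, cosh_sq_sub_sinh_sq y]

lemma two_mul_cosh_sub_one_lt_mul_sinh {x : ℝ} (hx : 0 < x) : 2 * (cosh x - 1) < x * sinh x := by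
  obtain ⟨y, rfl⟩ : ∃ y, x = 2 * y := ⟨x / 2, by ring⟩
  have hy : 0 < y := by linarith
  rw [cosh_two_mul, sinh_two_mul]
  nlinarith [sinh_lt_mul_cosh hy, sinh_pos_iff.mpr hy, cosh_sq_sub_sinh_sq y]

lemma two_mul_cosh_sub_one_pos {x : ℝ} (hx : x ≠ 0) : 0 < 2 * (cosh x - 1) := by
  linarith [one_lt_cosh.mpr hx]

end Real

open Real

/-- At `w = 0` the junk value `0 / 0 = 0` is also the limit of the quotient. -/
noncomputable def sinhRatio (w : ℝ) : ℝ := (sinh w - w) / (2 * (cosh w - 1))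

lemma sinhRatio_zero : sinhRatio 0 = 0 := by simp [sinhRatio]

lemma sinhRatio_neg (w : ℝ) : sinhRatio (-w) = -sinhRatio w := by
  rw [sinhRatio, sinhRatio, sinh_neg, cosh_neg, ← neg_div]
  ring_nf

lemma sinhRatio_pos {w : ℝ} (hw : 0 < w) : 0 < sinhRatio w :=
  div_pos (sub_pos.mpr (self_lt_sinh_iff.mpr hw)) (two_mul_cosh_sub_one_pos hw.ne')

lemma sinhRatio_lt_self {w : ℝ} (hw : 0 < w) : sinhRatio w < w := by
  rw [sinhRatio, div_lt_iff₀ (two_mul_cosh_sub_one_pos hw.ne')]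
  nlinarith [sinh_lt_mul_cosh hw, one_lt_cosh.mpr hw.ne']

lemma sinhRatio_lt_half (w : ℝ) : sinhRatio w < 1 / 2 := by
  rcases eq_or_ne w 0 with rfl | hw
  · norm_num [sinhRatio_zero]
  rw [sinhRatio, div_lt_iff₀ (two_mul_cosh_sub_one_pos hw)]
  have hexp := add_one_lt_exp (neg_ne_zero.mpr hw)
  linarith [cosh_sub_sinh w]

lemma abs_sinhRatio_lt_half (w : ℝ) : |sinhRatio w| < 1 / 2 := by
  refine abs_lt.mpr ⟨?_, sinhRatio_lt_half w⟩
  linarith [sinhRatio_neg w ▸ sinhRatio_lt_half (-w)]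

lemma half_sub_two_div_lt_sinhRatio {w : ℝ} (hw : 0 < w) : 1 / 2 - 2 / w < sinhRatio w := by
  rw [sinhRatio, lt_div_iff₀ (two_mul_cosh_sub_one_pos hw.ne')]
  have hexp : exp (-w) < 1 := exp_lt_one_iff.mpr (neg_lt_zero.mpr hw)
  have hquad := one_add_sq_div_two_le_cosh w
  have hlin : w ≤ 2 / w * (2 * (cosh w - 1)) := by
    rw [div_mul_eq_mul_div, le_div_iff₀ hw]
    nlinarith
  nlinarith [cosh_sub_sinh w]

lemma hasDerivAt_sinhRatio {w : ℝ} (hw : w ≠ 0) :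
    HasDerivAt sinhRatio
      (((cosh w - 1) * (2 * (cosh w - 1)) - (sinh w - w) * (2 * sinh w)) /
        (2 * (cosh w - 1)) ^ 2) w :=
  ((hasDerivAt_sinh w).sub (hasDerivAt_id w)).div
    (((hasDerivAt_cosh w).sub_const 1).const_mul 2) (two_mul_cosh_sub_one_pos hw).ne'

lemma continuousOn_sinhRatio : ContinuousOn sinhRatio (Ioi 0) :=
  fun _ hw ↦ (hasDerivAt_sinhRatio (ne_of_gt hw)).continuousAt.continuousWithinAt

lemma sinhRatio_strictMonoOn_Ioi : StrictMonoOn sinhRatio (Ioi 0) := by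
  refine strictMonoOn_of_deriv_pos (convex_Ioi 0) continuousOn_sinhRatio fun w hw ↦ ?_
  rw [interior_Ioi, mem_Ioi] at hw
  rw [(hasDerivAt_sinhRatio hw.ne').deriv]
  refine div_pos ?_ (pow_pos (two_mul_cosh_sub_one_pos hw.ne') 2)
  nlinarith [two_mul_cosh_sub_one_lt_mul_sinh hw, cosh_sq_sub_sinh_sq w]

lemma sinhRatio_strictMono : StrictMono sinhRatio := by
  refine strictMono_of_odd_strictMonoOn_nonneg sinhRatio_neg fun a ha b hb hab ↦ ?_
  rcases (mem_Ici.mp ha).eq_or_lt with rfl | ha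
  · simpa [sinhRatio_zero] using sinhRatio_pos hab
  · exact sinhRatio_strictMonoOn_Ioi ha (ha.trans hab) hab

lemma exists_sinhRatio_eq_of_pos {r : ℝ} (hr₀ : 0 < r) (hr : r < 1 / 2) :
    ∃ w, sinhRatio w = r := by
  set W := 4 / (1 - 2 * r)
  have hW : 4 ≤ W := (le_div_iff₀ (by linarith)).mpr (by nlinarith)
  have hlow : sinhRatio r < r := sinhRatio_lt_self hr₀
  have hhigh : r < sinhRatio W := by
    have hr' : 1 / 2 - 2 / W = r := by
      simp only [W]
      field_simp
      ring
    exact hr' ▸ half_sub_two_div_lt_sinhRatio (by linarith)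
  obtain ⟨w, -, hw⟩ := intermediate_value_Icc (by linarith : r ≤ W)
    (continuousOn_sinhRatio.mono fun x hx ↦ hr₀.trans_le hx.1) ⟨hlow.le, hhigh.le⟩
  exact ⟨w, hw⟩

lemma exists_sinhRatio_eq {r : ℝ} (hr : |r| < 1 / 2) : ∃ w, sinhRatio w = r := by
  rcases lt_trichotomy r 0 with hneg | rfl | hpos
  · obtain ⟨w, hw⟩ :=
      exists_sinhRatio_eq_of_pos (neg_pos.mpr hneg) (by linarith [neg_abs_le r])
    exact ⟨-w, by rw [sinhRatio_neg, hw, neg_neg]⟩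
  · exact ⟨0, sinhRatio_zero⟩
  · exact exists_sinhRatio_eq_of_pos hpos (lt_of_le_of_lt (le_abs_self r) hr)

lemma dslope_exp_zero_pos (w : ℝ) : 0 < dslope exp 0 w := by
  rcases eq_or_ne w 0 with rfl | hw
  · simp [dslope_same]
  · rw [dslope_of_ne _ hw]
    exact (exp_strictMono.strictMonoOn univ).slope_pos trivial trivial hw.symm

lemma dslope_exp_zero_of_ne {w : ℝ} (hw : w ≠ 0) : dslope exp 0 w = (exp w - 1) / w := by
  rw [dslope_of_ne _ hw, slope_def_field, exp_zero, sub_zero]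

lemma dslope_exp_zero_mul_dslope_exp_zero_neg {w : ℝ} (hw : w ≠ 0) :
    dslope exp 0 w * dslope exp 0 (-w) = 2 * (cosh w - 1) / w ^ 2 := by
  rw [dslope_exp_zero_of_ne hw, dslope_exp_zero_of_ne (neg_ne_zero.mpr hw), cosh_eq, exp_neg]
  field_simp
  ring

noncomputable def ofLightCone (X Y r : ℝ) : ℝ × ℝ × ℝ :=
  ((X + Y) / 2, (X - Y) / 2, X * Y / 2 * r)

lemma heisExp_one_eq (u v w : ℝ) :
    heisExp 1 (u, v, w) =
      ofLightCone ((u + v) * dslope exp 0 w) ((u - v) * dslope exp 0 (-w)) (sinhRatio w) := by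
  rcases eq_or_ne w 0 with rfl | hw
  · simp [heisExp, ofLightCone, sinhRatio_zero, dslope_same]
  have hz : (u ^ 2 - v ^ 2) / 2 * ((sinh w - w) / w ^ 2) =
      (u + v) * dslope exp 0 w * ((u - v) * dslope exp 0 (-w)) / 2 * sinhRatio w := by
    have hd : cosh w - 1 ≠ 0 := sub_ne_zero.mpr (one_lt_cosh.mpr hw).ne'
    calc (u ^ 2 - v ^ 2) / 2 * ((sinh w - w) / w ^ 2)
        = (u + v) * (u - v) / 2 * (2 * (cosh w - 1) / w ^ 2) * sinhRatio w := by
          rw [sinhRatio]; field_simp; ring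
      _ = _ := by rw [← dslope_exp_zero_mul_dslope_exp_zero_neg hw]; ring
  simp only [heisExp, if_neg hw, mul_one, ofLightCone, hz, Prod.mk.injEq, and_true]
  rw [dslope_exp_zero_of_ne hw, dslope_exp_zero_of_ne (neg_ne_zero.mpr hw), cosh_eq, sinh_eq,
    exp_neg]
  constructor <;> field_simp <;> ring

def futureLightCone : Set (ℝ × ℝ × ℝ) := {p | |p.2.1| < p.1}

lemma mk_mem_futureLightCone {u v w : ℝ} :
    (u, v, w) ∈ futureLightCone ↔ 0 < u + v ∧ 0 < u - v := by
  simp only [futureLightCone, mem_ofPred_eq, abs_lt]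
  constructor <;> rintro ⟨h₁, h₂⟩ <;> constructor <;> linarith

def chronologicalFuture : Set (ℝ × ℝ × ℝ) :=
  {q | 0 < q.1 ∧ -q.1 ^ 2 + q.2.1 ^ 2 + 4 * |q.2.2| < 0}

lemma ofLightCone_mem_chronologicalFuture {X Y r : ℝ} :
    ofLightCone X Y r ∈ chronologicalFuture ↔ 0 < X ∧ 0 < Y ∧ |r| < 1 / 2 := by
  have hsq : -((X + Y) / 2) ^ 2 + ((X - Y) / 2) ^ 2 = -(X * Y) := by ring
  simp only [chronologicalFuture, ofLightCone, mem_ofPred_eq, hsq]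
  constructor
  · rintro ⟨hsum, hlt⟩
    have hXY : 0 < X * Y := by linarith [abs_nonneg (X * Y / 2 * r)]
    have hX : 0 < X := by
      by_contra! hX
      nlinarith
    have hY : 0 < Y := pos_of_mul_pos_right hXY hX.le
    rw [abs_mul, abs_of_pos (half_pos hXY)] at hlt
    exact ⟨hX, hY, by nlinarith⟩
  · rintro ⟨hX, hY, hr⟩
    have hXY := mul_pos hX hY
    rw [abs_mul, abs_of_pos (half_pos hXY)]
    exact ⟨by linarith, by nlinarith⟩

lemma ofLightCone_inj {X Y r X' Y' r' : ℝ} (hXY : X * Y ≠ 0) :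
    ofLightCone X Y r = ofLightCone X' Y' r' ↔ X = X' ∧ Y = Y' ∧ r = r' := by
  refine ⟨fun h ↦ ?_, by rintro ⟨rfl, rfl, rfl⟩; rfl⟩
  simp only [ofLightCone, Prod.mk.injEq] at h
  obtain ⟨hx, hy, hz⟩ := h
  obtain rfl : X = X' := by linarith
  obtain rfl : Y = Y' := by linarith
  exact ⟨rfl, rfl, mul_left_cancel₀ (div_ne_zero hXY two_ne_zero) hz⟩

lemma exists_eq_ofLightCone {q : ℝ × ℝ × ℝ} (hq : q ∈ chronologicalFuture) :
    ∃ X Y r, q = ofLightCone X Y r := by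
  obtain ⟨x, y, z⟩ := q
  have hXY : (x + y) * (x - y) ≠ 0 := by
    simp only [chronologicalFuture, mem_ofPred_eq] at hq
    nlinarith [abs_nonneg z]
  obtain ⟨hX, hY⟩ := mul_ne_zero_iff.mp hXY
  refine ⟨x + y, x - y, 2 * z / ((x + y) * (x - y)), ?_⟩
  simp only [ofLightCone, Prod.mk.injEq]
  exact ⟨by ring, by ring, by field_simp⟩

lemma mapsTo_heisExp_one : MapsTo (heisExp 1) futureLightCone chronologicalFuture := by
  rintro ⟨u, v, w⟩ huv
  obtain ⟨hsum, hdiff⟩ := mk_mem_futureLightCone.mp huv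
  rw [heisExp_one_eq, ofLightCone_mem_chronologicalFuture]
  exact ⟨mul_pos hsum (dslope_exp_zero_pos w), mul_pos hdiff (dslope_exp_zero_pos (-w)),
    abs_sinhRatio_lt_half w⟩

lemma injOn_heisExp_one : InjOn (heisExp 1) futureLightCone := by
  rintro ⟨u, v, w⟩ huv ⟨u', v', w'⟩ - h
  obtain ⟨hsum, hdiff⟩ := mk_mem_futureLightCone.mp huv
  have hXY : 0 < (u + v) * dslope exp 0 w * ((u - v) * dslope exp 0 (-w)) :=
    mul_pos (mul_pos hsum (dslope_exp_zero_pos w)) (mul_pos hdiff (dslope_exp_zero_pos (-w)))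
  rw [heisExp_one_eq, heisExp_one_eq, ofLightCone_inj hXY.ne'] at h
  obtain ⟨hX, hY, hr⟩ := h
  obtain rfl := sinhRatio_strictMono.injective hr
  have hsum' := mul_right_cancel₀ (dslope_exp_zero_pos w).ne' hX
  have hdiff' := mul_right_cancel₀ (dslope_exp_zero_pos (-w)).ne' hY
  simp only [Prod.mk.injEq, and_true]
  exact ⟨by linarith, by linarith⟩

lemma surjOn_heisExp_one : SurjOn (heisExp 1) futureLightCone chronologicalFuture := by
  intro q hq
  obtain ⟨X, Y, r, rfl⟩ := exists_eq_ofLightCone hq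
  obtain ⟨hX, hY, hr⟩ := ofLightCone_mem_chronologicalFuture.mp hq
  obtain ⟨w, rfl⟩ := exists_sinhRatio_eq hr
  have hG := dslope_exp_zero_pos w
  have hG' := dslope_exp_zero_pos (-w)
  set a := X / dslope exp 0 w
  set b := Y / dslope exp 0 (-w)
  have ha : 0 < a := div_pos hX hG
  have hb : 0 < b := div_pos hY hG'
  refine ⟨((a + b) / 2, (a - b) / 2, w),
    mk_mem_futureLightCone.mpr ⟨by linarith, by linarith⟩, ?_⟩
  rw [heisExp_one_eq]
  congr 1 <;> simp only [a, b] <;> field_simp <;> ring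

/-- `exp^{(1)}` restricted to `U = {(u,v,w) : u > |v|}` is a bijection
onto the chronological future `{(x,y,z) : x > 0 and −x² + y² + 4|z| < 0}` of the origin. -/
theorem heisExp_bijOn :
    BijOn (heisExp 1) {p : ℝ × ℝ × ℝ | |p.2.1| < p.1}
      {q : ℝ × ℝ × ℝ | 0 < q.1 ∧ -q.1^2 + q.2.1^2 + 4 * |q.2.2| < 0} :=
  ⟨mapsTo_heisExp_one, injOn_heisExp_one, surjOn_heisExp_one⟩
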